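/- arXiv:2310.19006 — 3 statements merged into one kernel-verified Lean document; each statement's English description precedes it below -/
import Mathlib

section
/- Let (H,X) be a conjunctive query and ℓ a positive integer. Then the treewidth of the ℓ-copy F_ℓ(H,X) is at most the treewidth of the extension graph Γ(H,X). -/
/-- The canonical map `γ` from the vertices of the `ℓ`-copy `F_ℓ(H,X)` to the
vertices of `H`: each `x ∈ X` goes to itself, and each clone `(y,i)` goes to `y`. -/
def gammaMap {V : Type*} (X : Set V) (ℓ : ℕ) :
    (↥X ⊕ (↥(Xᶜ) × Fin ℓ)) → V
  | Sum.inl x => ↑x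
  | Sum.inr (y, _) => ↑y

/-- The copy index of a vertex of `F_ℓ(H,X)` (if any). -/
def copyIdx {V : Type*} (X : Set V) (ℓ : ℕ) :
    (↥X ⊕ (↥(Xᶜ) × Fin ℓ)) → Option (Fin ℓ)
  | Sum.inl _ => none
  | Sum.inr (_, i) => some i

/-- The `ℓ`-copy `F_ℓ(H,X)`: vertex set `X ∪ ((V(H)∖X) × [ℓ])`; two vertices are
adjacent iff their `γ`-images are adjacent in `H` and, when both lie in the cloned
part, their copy indices coincide.  (Edges within `X`, edges `{u,(v,i)}` for all
indices `i`, and edges `{(u,i),(v,i)}` within each copy.) -/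
def copyGraph {V : Type*} (H : SimpleGraph V) (X : Set V) (ℓ : ℕ) :
    SimpleGraph (↥X ⊕ (↥(Xᶜ) × Fin ℓ)) where
  Adj a b := H.Adj (gammaMap X ℓ a) (gammaMap X ℓ b) ∧
    ∀ i j, copyIdx X ℓ a = some i → copyIdx X ℓ b = some j → i = j
  symm := by
    constructor
    intro a b h
    exact ⟨h.1.symm, fun i j hi hj => (h.2 j i hj hi).symm⟩
  loopless := by
    constructor
    intro a h
    exact H.irrefl h.1

/-- A tree decomposition of a simple graph `G`. -/
structure TreeDecomp {V : Type*} (G : SimpleGraph V) where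
  /-- the index type of the decomposition tree -/
  ι : Type
  /-- the decomposition tree -/
  T : SimpleGraph ι
  /-- `T` is a tree -/
  tree : T.IsTree
  /-- the bags -/
  bag : ι → Set V
  /-- (T1) every vertex occurs in some bag -/
  covers_vertex : ∀ v : V, ∃ t, v ∈ bag t
  /-- (T3) every edge is contained in some bag -/
  covers_edge : ∀ ⦃u v : V⦄, G.Adj u v → ∃ t, u ∈ bag t ∧ v ∈ bag t
  /-- (T2) for every vertex the set of bags containing it induces a connected subtree -/
  bags_connected : ∀ v : V, (T.induce {t | v ∈ bag t}).Connected

/-- `G` has a tree decomposition of width at most `k`. -/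
def TreewidthAtMost {V : Type*} (G : SimpleGraph V) (k : ℕ) : Prop :=
  ∃ D : TreeDecomp G, ∀ t, (D.bag t).ncard ≤ k + 1

/-- The treewidth of a (finite) simple graph: the least `k` such that `G` has a
tree decomposition of width `k`. -/
noncomputable def treewidth {V : Type*} (G : SimpleGraph V) : ℕ :=
  sInf {k | TreewidthAtMost G k}

/-- The extension `Γ(H,X)` of a conjunctive query `(H,X)`: the graph on `V(H)` whose
edges are those of `H` together with all pairs `{u,v}` of distinct vertices of `X`
such that some connected component of the induced subgraph `H[V(H)∖X]` is adjacent in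
`H` to both `u` and `v`. -/
def extGraph {V : Type*} (H : SimpleGraph V) (X : Set V) : SimpleGraph V where
  Adj u v := H.Adj u v ∨ (u ≠ v ∧ u ∈ X ∧ v ∈ X ∧
    ∃ (w₁ w₂ : ↥(Xᶜ)), H.Adj u ↑w₁ ∧ H.Adj v ↑w₂ ∧ (H.induce Xᶜ).Reachable w₁ w₂)
  symm := by
    constructor
    intro u v h
    rcases h with h | ⟨hne, hu, hv, w₁, w₂, h1, h2, h3⟩
    · exact Or.inl h.symm
    · exact Or.inr ⟨hne.symm, hv, hu, w₂, w₁, h2, h1, h3.symm⟩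
  loopless := by
    constructor
    intro u h
    rcases h with h | ⟨hne, _⟩
    · exact H.irrefl h
    · exact hne rfl

/-!
Take a tree decomposition of `Γ(H,X)` of width `k`. For every component `C` of `H[V ∖ X]` the
set `N(C) ⊆ X` of its neighbours is a clique of `Γ(H,X)`, so by the Helly property of subtrees of
a tree some bag contains `N(C)`. Below that node hang, for every `i ∈ [ℓ]`, a fresh copy of the
decomposition tree whose bags keep only `N(C)` and the `i`-th clones of `C`, while the original
tree keeps only `X`. Every new bag maps injectively into an old one, so the width does not grow.
-/

namespace SimpleGraph

variable {α : Type*} {G : SimpleGraph α}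

def IsPathConvex (G : SimpleGraph α) (A : Set α) : Prop :=
  ∀ ⦃s t : α⦄ (p : G.Walk s t), p.IsPath → s ∈ A → t ∈ A → ∀ u ∈ p.support, u ∈ A

theorem IsPathConvex.inter {A B : Set α} (hA : G.IsPathConvex A) (hB : G.IsPathConvex B) :
    G.IsPathConvex (A ∩ B) := fun _ _ p hp hs ht u hu =>
  ⟨hA p hp hs.1 ht.1 u hu, hB p hp hs.2 ht.2 u hu⟩

/-- In a forest the path between two vertices of a connected set is the bypass of a walk
inside the set. -/
theorem IsAcyclic.isPathConvex_of_connected_induce (hG : G.IsAcyclic) {A : Set α}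
    (hA : (G.induce A).Connected) : G.IsPathConvex A := by
  classical
  intro s t p hp hs ht u hu
  obtain ⟨w⟩ := hA.preconnected ⟨s, hs⟩ ⟨t, ht⟩
  let q := (w.map (Embedding.induce A).toHom).bypass
  have hpq : p = q := congrArg Subtype.val <|
    (hG.subsingleton_path s t).elim ⟨p, hp⟩ ⟨q, Walk.bypass_isPath _⟩
  obtain ⟨⟨v, hv⟩, -, rfl⟩ := List.mem_map.1 <|
    (Walk.support_map _ _ ▸ Walk.support_bypass_subset_support _ (hpq ▸ hu) :)
  exact hv

theorem IsPathConvex.inter_inter_nonempty (hG : G.Preconnected) {A B C : Set α}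
    (hA : G.IsPathConvex A) (hB : G.IsPathConvex B) (hC : G.IsPathConvex C) {x y z : α}
    (hxA : x ∈ A) (hxB : x ∈ B) (hyB : y ∈ B) (hyC : y ∈ C) (hzA : z ∈ A) (hzC : z ∈ C) :
    (A ∩ B ∩ C).Nonempty := by
  classical
  obtain ⟨r, hrC⟩ : ∃ r : G.Walk y z, ∀ u ∈ r.support, u ∈ C :=
    ⟨_, hC _ (Walk.bypass_isPath (hG y z).some) hyC hzC⟩
  suffices key : ∀ x (q : G.Walk x y), q.IsPath → x ∈ A → (∀ u ∈ q.support, u ∈ B) →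
      (A ∩ B ∩ C).Nonempty from
    key x _ (Walk.bypass_isPath (hG x y).some) hxA (hB _ (Walk.bypass_isPath _) hxB hyB)
  intro x q hq hxA hqB
  induction q with
  | nil => exact ⟨_, ⟨hxA, hyB⟩, hyC⟩
  | @cons x x' _ h q' ih =>
    by_cases hxC : x ∈ C
    · exact ⟨x, ⟨hxA, hqB x (by simp)⟩, hxC⟩
    -- `x'` reaches `z` avoiding `x` (first along `q'`, then inside `C`), so it lies on the
    -- path from `x` to `z`, which stays in `A`.
    let w := (q'.append r).bypass
    have hxw : x ∉ w.support := fun hx => by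
      rcases (Walk.mem_support_append_iff _ _).1 (Walk.support_bypass_subset_support _ hx)
        with hx | hx
      · exact (Walk.cons_isPath_iff _ _).1 hq |>.2 hx
      · exact hxC (hrC x hx)
    have hx'A : x' ∈ A :=
      hA (.cons h w) ((Walk.bypass_isPath _).cons hxw) hxA hzA x' (by simp)
    exact ih hyB hyC r hrC hq.of_cons hx'A fun u hu => hqB u (by simp [hu])

theorem Connected.exists_mem_biInter_of_isPathConvex (hG : G.Connected) {β : Type*}
    (s : Finset β) (A : β → Set α) (hA : ∀ b ∈ s, G.IsPathConvex (A b))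
    (hpair : ∀ b ∈ s, ∀ c ∈ s, (A b ∩ A c).Nonempty) : ∃ t, ∀ b ∈ s, t ∈ A b := by
  classical
  induction s using Finset.induction_on generalizing A with
  | empty => exact ⟨hG.nonempty.some, by simp⟩
  | @insert a s ha ih =>
    -- Replace each `A b` by `A b ∩ A a`; these are pairwise intersecting by the case of three.
    obtain ⟨t, ht⟩ := ih (fun b => A b ∩ A a)
      (fun b hb => (hA b (by simp [hb])).inter (hA a (by simp)))
      (fun b hb c hc => by
        obtain ⟨x, hx⟩ := hpair b (by simp [hb]) c (by simp [hc])
        obtain ⟨y, hy⟩ := hpair c (by simp [hc]) a (by simp)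
        obtain ⟨z, hz⟩ := hpair b (by simp [hb]) a (by simp)
        obtain ⟨m, ⟨hmb, hmc⟩, hma⟩ := (hA b (by simp [hb])).inter_inter_nonempty
          hG.preconnected (hA c (by simp [hc])) (hA a (by simp)) hx.1 hx.2 hy.1 hy.2 hz.1 hz.2
        exact ⟨m, ⟨hmb, hma⟩, hmc, hma⟩)
    obtain rfl | ⟨b, hb⟩ := s.eq_empty_or_nonempty
    · obtain ⟨t, ht⟩ := hpair a (by simp) a (by simp)
      exact ⟨t, by simpa using ht.1⟩
    · exact ⟨t, by simpa using ⟨(ht b hb).2, fun c hc => (ht c hc).1⟩⟩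

theorem isBridge_iff_exists_separating {u v : α} :
    G.IsBridge s(u, v) ↔ ∃ P : α → Prop, P u ∧ ¬ P v ∧
      ∀ ⦃x y⦄, G.Adj x y → P x → ¬ P y → s(x, y) = s(u, v) := by
  rw [isBridge_iff]
  constructor
  · refine fun h => ⟨(G.deleteEdges {s(u, v)}).Reachable u, .rfl, h, fun x y hxy hx hy => ?_⟩
    by_contra hne
    exact hy (hx.trans (Adj.reachable ((deleteEdges_adj ..).2 ⟨hxy, hne⟩)))
  · rintro ⟨P, hu, hv, hP⟩ ⟨w⟩
    refine hv (w.rec (motive := fun a b _ => P a → P b) id (fun hxy _ ih hx => ?_) hu)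
    obtain ⟨hxy, hne⟩ := (deleteEdges_adj ..).1 hxy
    exact ih (by_contra fun hy => hne (hP hxy hx hy))

variable {J : Type*}

/-- `T` with a copy of itself hung below `r j` for every `j`: the fibre `none` is the
original, the fibre `some j` the `j`-th copy, joined by the edge `(r j, none) — (r j, some j)`. -/
def graft (T : SimpleGraph α) (r : J → α) : SimpleGraph (α × Option J) :=
  T.boxProd (⊥ : SimpleGraph (Option J)) ⊔
    fromEdgeSet (Set.range fun j => s((r j, none), (r j, some j)))

variable {T : SimpleGraph α} {r : J → α}

theorem graft_adj {p q : α × Option J} :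
    (T.graft r).Adj p q ↔ T.Adj p.1 q.1 ∧ p.2 = q.2 ∨
      ∃ j, s((r j, none), (r j, some j)) = s(p, q) := by
  simp only [graft, sup_adj, boxProd_adj, bot_adj, false_and, or_false, fromEdgeSet_adj,
    Set.mem_range]
  refine or_congr_right ⟨And.left, fun h => ⟨h, ?_⟩⟩
  obtain ⟨j, hj⟩ := h
  rcases Sym2.eq_iff.1 hj with ⟨rfl, rfl⟩ | ⟨rfl, rfl⟩ <;> simp

theorem graft_adj_fibre {s t : α} {m : Option J} :
    (T.graft r).Adj (s, m) (t, m) ↔ T.Adj s t := by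
  rw [graft_adj]
  refine ⟨?_, fun h => .inl ⟨h, rfl⟩⟩
  rintro (⟨h, -⟩ | ⟨j, hj⟩)
  · exact h
  · rcases Sym2.eq_iff.1 hj with ⟨h₁, h₂⟩ | ⟨h₁, h₂⟩ <;> simp only [Prod.mk.injEq] at h₁ h₂ <;>
      exact absurd (h₁.2.trans h₂.2.symm) (by simp)

theorem graft_adj_root (j : J) : (T.graft r).Adj (r j, none) (r j, some j) :=
  graft_adj.2 (.inr ⟨j, rfl⟩)

def graftFibre (m : Option J) : T →g graft T r where
  toFun s := (s, m)
  map_rel' := graft_adj_fibre.2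

theorem Preconnected.graft (hT : T.Preconnected) : (T.graft r).Preconnected := by
  have reach_base : ∀ p : α × Option J, ∀ t, (T.graft r).Reachable p (t, none) := by
    rintro ⟨s, _ | j⟩ t
    · exact (hT s t).map (graftFibre none)
    · exact ((hT s (r j)).map (graftFibre (some j))).trans
        ((graft_adj_root j).symm.reachable.trans ((hT (r j) t).map (graftFibre none)))
  exact fun p q => (reach_base p q.1).trans (reach_base q q.1).symm

/-- Collapses every fibre other than `m` to the vertex of `T` through which it is joined to
fibre `m`. -/
def graftProj [DecidableEq J] (r : J → α) (m : Option J) (p : α × Option J) : α :=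
  if p.2 = m then p.1 else (m.or p.2).elim p.1 r

theorem graftProj_eq_of_adj [DecidableEq J] {m : Option J} {p q : α × Option J}
    (h : (T.graft r).Adj p q)
    (hm : ¬ (m = p.2 ∧ m = q.2)) : graftProj r m p = graftProj r m q := by
  rcases graft_adj.1 h with ⟨-, hpq⟩ | ⟨j, hj⟩
  · obtain ⟨s, n⟩ := p
    obtain ⟨t, n⟩ := q
    cases m <;> cases n <;> simp_all [graftProj, eq_comm]
  · rcases Sym2.eq_iff.1 hj with ⟨rfl, rfl⟩ | ⟨rfl, rfl⟩ <;>
      cases m <;> simp +contextual [graftProj]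

theorem IsTree.graft (hT : T.IsTree) : (T.graft r).IsTree := by
  classical
  have : Nonempty α := hT.connected.nonempty
  refine ⟨⟨hT.connected.preconnected.graft⟩, isAcyclic_iff_forall_adj_isBridge.2 ?_⟩
  rintro ⟨s, m⟩ ⟨t, n⟩ h
  rcases graft_adj.1 h with ⟨hst, rfl : m = n⟩ | ⟨j, hj⟩
  · -- Pull back a separation of `s` and `t` in `T` along `graftProj r m`.
    obtain ⟨P, hs, ht, hP⟩ :=
      isBridge_iff_exists_separating.1 (isAcyclic_iff_forall_adj_isBridge.1 hT.isAcyclic hst)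
    refine isBridge_iff_exists_separating.2
      ⟨P ∘ graftProj r m, by simpa [graftProj], by simpa [graftProj], ?_⟩
    rintro ⟨x, m₁⟩ ⟨y, m₂⟩ hxy hx hy
    obtain ⟨rfl, rfl⟩ : m = m₁ ∧ m = m₂ := not_not.1 fun hm =>
      hy (by simpa only [Function.comp_apply, graftProj_eq_of_adj hxy hm] using hx)
    have := hP (graft_adj_fibre.1 hxy) (by simpa [graftProj] using hx)
      (by simpa [graftProj] using hy)
    simpa using congrArg (Sym2.map (·, m)) this
  · rw [← hj]
    refine isBridge_iff_exists_separating.2 ⟨fun p => p.2 ≠ some j, by simp, by simp, ?_⟩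
    rintro x y hxy hx hy
    rcases graft_adj.1 hxy with ⟨-, hxy⟩ | ⟨j', hj'⟩
    · exact absurd (by simpa [← hxy] using hx) hy
    · rcases Sym2.eq_iff.1 hj' with ⟨rfl, rfl⟩ | ⟨rfl, rfl⟩
      · obtain rfl : j' = j := by simpa using hy
        rfl
      · simp at hy

variable {S : Set α}

theorem Connected.graft_induce_prod_singleton (hS : (T.induce S).Connected) (m : Option J) :
    ((T.graft r).induce (S ×ˢ {m})).Connected :=
  hS.map ⟨fun s => ⟨(s.1, m), s.2, rfl⟩, fun h => graft_adj_fibre.2 h⟩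
    (by rintro ⟨⟨s, _⟩, hs, rfl⟩; exact ⟨⟨s, hs⟩, rfl⟩)

theorem Connected.graft_induce_prod (hS : (T.induce S).Connected) {M : Set (Option J)}
    (hnone : none ∈ M) (hroot : ∀ j, some j ∈ M → r j ∈ S) :
    ((T.graft r).induce (S ×ˢ M)).Connected := by
  obtain ⟨⟨t, ht⟩⟩ := hS.nonempty
  refine induce_connected_of_patches (t, none) ⟨ht, hnone⟩ ?_
  rintro ⟨s, _ | j⟩ ⟨hs, hn⟩
  · exact ⟨S ×ˢ {none}, Set.prod_mono_right (by simpa using hnone), ⟨ht, rfl⟩, ⟨hs, rfl⟩,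
      (hS.graft_induce_prod_singleton none).preconnected _ _⟩
  · refine ⟨S ×ˢ {none} ∪ S ×ˢ {some j},
      Set.union_subset (Set.prod_mono_right (by simpa using hnone))
        (Set.prod_mono_right (by simpa using hn)),
      .inl ⟨ht, rfl⟩, .inr ⟨hs, rfl⟩, ?_⟩
    exact (connected_induce_union (v := (r j, none)) (w := (r j, some j))
      (hS.graft_induce_prod_singleton none).preconnected
      (hS.graft_induce_prod_singleton (some j)).preconnected ⟨hroot j hn, rfl⟩
      ⟨hroot j hn, rfl⟩ (graft_adj_root j)).preconnected _ _

end SimpleGraph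

namespace TreeDecomp

variable {V : Type*} {G : SimpleGraph V}

theorem exists_bag_superset_of_isClique (D : TreeDecomp G) {K : Set V} (hfin : K.Finite)
    (hK : G.IsClique K) : ∃ t, K ⊆ D.bag t := by
  obtain ⟨t, ht⟩ := D.tree.connected.exists_mem_biInter_of_isPathConvex hfin.toFinset
    (fun v => {t | v ∈ D.bag t})
    (fun v _ => D.tree.isAcyclic.isPathConvex_of_connected_induce (D.bags_connected v))
    (fun u hu v hv => by
      rw [Set.Finite.mem_toFinset] at hu hv
      obtain rfl | huv := eq_or_ne u v
      · obtain ⟨t, ht⟩ := D.covers_vertex u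
        exact ⟨t, ht, ht⟩
      · exact D.covers_edge (hK hu hv huv))
  exact ⟨t, fun v hv => ht v (hfin.mem_toFinset.2 hv)⟩

end TreeDecomp

theorem treewidthAtMost_treewidth {V : Type*} [Finite V] (G : SimpleGraph V) :
    TreewidthAtMost G (treewidth G) := by
  refine Nat.sInf_mem (s := {k | TreewidthAtMost G k}) ⟨Nat.card V, ?_⟩
  refine ⟨⟨Unit, ⊥, .of_subsingleton, fun _ => Set.univ, fun _ => ⟨(), trivial⟩,
    fun _ _ _ => ⟨(), trivial, trivial⟩, fun v => ?_⟩, fun _ => ?_⟩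
  · have : Nonempty {t : Unit | v ∈ Set.univ} := ⟨⟨(), trivial⟩⟩
    exact SimpleGraph.IsTree.of_subsingleton.connected
  · simp [Set.ncard_univ]

theorem treewidth_le {V : Type*} {G : SimpleGraph V} {k : ℕ} (h : TreewidthAtMost G k) :
    treewidth G ≤ k :=
  Nat.sInf_le h

def compNbhd {V κ : Type*} (H : SimpleGraph V) {X : Set V} (cmp : ↥Xᶜ → κ) (c : κ) : Set V :=
  {x | x ∈ X ∧ ∃ y : ↥Xᶜ, cmp y = c ∧ H.Adj x y}

/-- The fibres of the grafted tree whose bags may hold a vertex of `F_ℓ(H,X)`: `x ∈ X` lies in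
the base and in every copy `(c, i)` whose component `c` it touches, the clone `(y, i)` only in
the copy `(c, i)` of the component `c` of `y`. -/
def copyFibres {V κ : Type*} {ℓ : ℕ} (H : SimpleGraph V) {X : Set V} (cmp : ↥Xᶜ → κ) :
    ↥X ⊕ (↥Xᶜ × Fin ℓ) → Set (Option (κ × Fin ℓ))
  | .inl x => {m | m.elim True fun p => ↑x ∈ compNbhd H cmp p.1}
  | .inr (y, i) => {some (cmp y, i)}

section

variable {V κ : Type*} {H : SimpleGraph V} {X : Set V} {ℓ : ℕ} (cmp : ↥Xᶜ → κ)

theorem isClique_compNbhd (hcmp : ∀ y y', cmp y = cmp y' → (H.induce Xᶜ).Reachable y y')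
    (c : κ) : (extGraph H X).IsClique (compNbhd H cmp c) := by
  rintro x ⟨hx, y, rfl, hxy⟩ x' ⟨hx', y', hy', hxy'⟩ hne
  exact .inr ⟨hne, hx, hx', y, y', hxy, hxy', hcmp _ _ hy'.symm⟩

theorem copyFibres_nonempty (w : ↥X ⊕ (↥Xᶜ × Fin ℓ)) : (copyFibres H cmp w).Nonempty := by
  rcases w with x | ⟨y, i⟩
  · exact ⟨none, trivial⟩
  · exact ⟨_, rfl⟩

theorem copyFibres_inter_nonempty_of_adj
    (hcmp : ∀ y y', (H.induce Xᶜ).Adj y y' → cmp y = cmp y')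
    {w w' : ↥X ⊕ (↥Xᶜ × Fin ℓ)} (h : (copyGraph H X ℓ).Adj w w') :
    (copyFibres H cmp w ∩ copyFibres H cmp w').Nonempty := by
  rcases w with x | ⟨y, i⟩ <;> rcases w' with x' | ⟨y', i'⟩
  · exact ⟨none, trivial, trivial⟩
  · exact ⟨some (cmp y', i'), ⟨x.2, y', rfl, h.1⟩, rfl⟩
  · exact ⟨some (cmp y, i), rfl, ⟨x'.2, y, rfl, h.1.symm⟩⟩
  · obtain rfl : i = i' := h.2 i i' rfl rfl
    exact ⟨some (cmp y, i), rfl, by simp [copyFibres, hcmp y y' h.1]⟩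

theorem injOn_gammaMap_copyFibres (m : Option (κ × Fin ℓ)) :
    Set.InjOn (gammaMap X ℓ) {w | m ∈ copyFibres H cmp w} := by
  rintro (x | ⟨y, i⟩) hw (x' | ⟨y', i'⟩) hw' h <;> simp only [gammaMap] at h
  · exact congrArg Sum.inl (Subtype.ext h)
  · exact absurd (h ▸ x.2) y'.2
  · exact absurd (h ▸ y.2) (not_not.2 x'.2)
  · obtain rfl := Subtype.ext h
    obtain rfl : i = i' := by simp_all [copyFibres]
    rfl

end

section

variable {V : Type*} {κ : Type} {H : SimpleGraph V} {X : Set V} {ℓ : ℕ} (cmp : ↥Xᶜ → κ)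

def copyDecomp (D : TreeDecomp (extGraph H X)) (att : κ → D.ι)
    (hatt : ∀ c, compNbhd H cmp c ⊆ D.bag (att c))
    (hcmp : ∀ y y', (H.induce Xᶜ).Adj y y' → cmp y = cmp y') : TreeDecomp (copyGraph H X ℓ) where
  ι := D.ι × Option (κ × Fin ℓ)
  T := D.T.graft fun p => att p.1
  tree := D.tree.graft
  bag n := {w | gammaMap X ℓ w ∈ D.bag n.1 ∧ n.2 ∈ copyFibres H cmp w}
  covers_vertex w := by
    obtain ⟨t, ht⟩ := D.covers_vertex (gammaMap X ℓ w)
    obtain ⟨m, hm⟩ := copyFibres_nonempty cmp w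
    exact ⟨(t, m), ht, hm⟩
  covers_edge w w' h := by
    obtain ⟨t, ht, ht'⟩ := D.covers_edge (Or.inl h.1 : (extGraph H X).Adj _ _)
    obtain ⟨m, hm, hm'⟩ := copyFibres_inter_nonempty_of_adj cmp hcmp h
    exact ⟨(t, m), ⟨ht, hm⟩, ht', hm'⟩
  bags_connected := by
    rintro (x | ⟨y, i⟩)
    · exact (D.bags_connected _).graft_induce_prod trivial fun p hp => hatt p.1 hp
    · exact (D.bags_connected _).graft_induce_prod_singleton _

theorem ncard_copyDecomp_bag_le [Finite V] (D : TreeDecomp (extGraph H X)) (att : κ → D.ι)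
    (hatt : ∀ c, compNbhd H cmp c ⊆ D.bag (att c))
    (hcmp : ∀ y y', (H.induce Xᶜ).Adj y y' → cmp y = cmp y') (n : D.ι × Option (κ × Fin ℓ)) :
    ((copyDecomp cmp D att hatt hcmp).bag n).ncard ≤ (D.bag n.1).ncard :=
  Set.ncard_le_ncard_of_injOn _ (fun _ hw => hw.1)
    ((injOn_gammaMap_copyFibres cmp n.2).mono fun _ hw => hw.2)

end

theorem TreewidthAtMost.copyGraph_of_extGraph {V : Type*} [Finite V] {H : SimpleGraph V}
    {X : Set V} {k : ℕ} (h : TreewidthAtMost (extGraph H X) k) (ℓ : ℕ) :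
    TreewidthAtMost (copyGraph H X ℓ) k := by
  obtain ⟨D, hD⟩ := h
  -- Components of `H[Xᶜ]` are relabelled by `Fin n` so that the new tree lives in `Type`.
  let e := Finite.equivFin (H.induce Xᶜ).ConnectedComponent
  let cmp : ↥Xᶜ → Fin _ := fun y => e ((H.induce Xᶜ).connectedComponentMk y)
  have hcmp : ∀ y y', cmp y = cmp y' ↔ (H.induce Xᶜ).Reachable y y' := fun _ _ =>
    e.injective.eq_iff.trans SimpleGraph.ConnectedComponent.eq
  choose att hatt using fun c => D.exists_bag_superset_of_isClique (Set.toFinite _)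
    (isClique_compNbhd cmp (fun y y' => (hcmp y y').1) c)
  exact ⟨copyDecomp cmp D att hatt fun y y' h => (hcmp y y').2 h.reachable,
    fun n => (ncard_copyDecomp_bag_le cmp D att hatt _ n).trans (hD n.1)⟩

theorem stmt5_general {V : Type*} [Fintype V] (H : SimpleGraph V) (X : Set V)
    (ℓ : ℕ) :
    treewidth (copyGraph H X ℓ) ≤ treewidth (extGraph H X) :=
  treewidth_le ((treewidthAtMost_treewidth _).copyGraph_of_extGraph ℓ)

/-- The treewidth of the `ℓ`-copy `F_ℓ(H,X)` is at most the
treewidth of the extension graph `Γ(H,X)`. -/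
theorem stmt5 {V : Type*} [Fintype V] (H : SimpleGraph V) (X : Set V)
    (ℓ : ℕ) (hℓ : 0 < ℓ) :
    treewidth (copyGraph H X ℓ) ≤ treewidth (extGraph H X) :=
  stmt5_general H X ℓ
end

section
/- Let H, G, F be graphs with F connected, c : G → F and τ : H → F homomorphisms. Let v₁,…,v_k be distinct vertices of F, z₁,…,z_k positive integers, and for each i let d_i = |{u ∈ V(H) : τ(u) = v_i}|. Let G' be the graph obtained from G by cloning, for each i, the colour class c⁻¹(v_i) into z_i copies, with induced colouring c'. Then |Hom_τ(H,G',F,c')| = |Hom_τ(H,G,F,c)| · Π_{i=1}^{k} z_i^{d_i}. -/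
/-- The vertex type of the cloned graph `𝒢(G,F,c,v⃗,z⃗)`: primal vertices (those whose
colour is not among `v₁,…,v_k`) together with, for each `i`, the clones
`c⁻¹(v_i) × [z_i]`. -/
def CloneVert {VG VF : Type*} (c : VG → VF) (k : ℕ) (vs : Fin k → VF)
    (z : Fin k → ℕ) : Type _ :=
  {v : VG // ∀ i, c v ≠ vs i} ⊕ (Σ i : Fin k, {v : VG // c v = vs i} × Fin (z i))

/-- The projection `ρ` sending each vertex of the cloned graph to its underlying
original vertex of `G`. -/
def cloneProj {VG VF : Type*} (c : VG → VF) (k : ℕ) (vs : Fin k → VF)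
    (z : Fin k → ℕ) : CloneVert c k vs z → VG
  | Sum.inl v => ↑v
  | Sum.inr ⟨_, v, _⟩ => ↑v

/-- The cloned graph `𝒢(G,F,c,v⃗,z⃗)`: two vertices are adjacent iff their underlying
original vertices are adjacent in `G`. -/
def cloneGraph {VG VF : Type*} (G : SimpleGraph VG) (c : VG → VF) (k : ℕ)
    (vs : Fin k → VF) (z : Fin k → ℕ) : SimpleGraph (CloneVert c k vs z) where
  Adj a b := G.Adj (cloneProj c k vs z a) (cloneProj c k vs z b)
  symm := ⟨fun _ _ h => SimpleGraph.Adj.symm h⟩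
  loopless := ⟨fun _ h => G.irrefl h⟩

/-!
A homomorphism `H → G'` is the same as a homomorphism `h : H → G` together with a choice,
for every `u ∈ V(H)`, of a vertex of `G'` above `h u`, because adjacency in `G'` is pulled
back from `G`. Above a vertex of colour `v_i` lie exactly `z_i` clones, and above any other
vertex exactly one; since `c ∘ h = τ`, the choices amount to a map `τ⁻¹(v_i) → [z_i]` for
each `i`, whence the factor `∏ z_i ^ d_i`, independently of `h`.
-/

namespace SimpleGraph

variable {VH V V' W : Type*} {H : SimpleGraph VH} {G : SimpleGraph V}

def homComapEquiv (p : V' → V) :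
    (H →g G.comap p) ≃ Σ h : H →g G, {f : VH → V' // ∀ u, p (f u) = h u} where
  toFun h' := ⟨⟨p ∘ h', h'.map_rel⟩, h', fun _ => rfl⟩
  invFun h := ⟨h.2.1, fun hab => by simpa only [comap_adj, h.2.2] using h.1.map_rel hab⟩
  left_inv _ := rfl
  right_inv := by
    rintro ⟨⟨h, hh⟩, f, hf⟩
    obtain rfl : h = p ∘ f := funext fun u => (hf u).symm
    rfl

def homComapColoringEquiv (p : V' → V) (χ : V → W) (τ : VH → W) :
    {h' : H →g G.comap p // ∀ u, χ (p (h' u)) = τ u} ≃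
      Σ h : {h : H →g G // ∀ u, χ (h u) = τ u}, {f : VH → V' // ∀ u, p (f u) = h.1 u} :=
  (Equiv.subtypeEquiv (homComapEquiv (H := H) (G := G) p) fun _ => Iff.rfl).trans
    (Equiv.subtypeSigmaEquiv _ fun h => ∀ u, χ (h u) = τ u)

end SimpleGraph

section Clone

variable {VH VG VF : Type*} {c : VG → VF} {k : ℕ} {vs : Fin k → VF} {z : Fin k → ℕ}

def cloneIndex (hvs : Function.Injective vs) :
    ∀ (x : CloneVert c k vs z) (i : Fin k), c (cloneProj c k vs z x) = vs i → Fin (z i)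
  | Sum.inl v, i, hx => absurd hx (v.2 i)
  | Sum.inr ⟨_, v, j⟩, _, hx => hvs (v.2.symm.trans hx) ▸ j

theorem cloneIndex_injective (hvs : Function.Injective vs) {x y : CloneVert c k vs z}
    (hxy : cloneProj c k vs z x = cloneProj c k vs z y)
    (hidx : ∀ i hx hy, cloneIndex hvs x i hx = cloneIndex hvs y i hy) : x = y := by
  match x, y with
  | Sum.inl v, Sum.inl w => exact congrArg Sum.inl (Subtype.ext hxy)
  | Sum.inl v, Sum.inr ⟨i, w, _⟩ =>
    exact (v.2 i (congrArg c hxy ▸ w.2)).elim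
  | Sum.inr ⟨i, v, _⟩, Sum.inl w =>
    exact (w.2 i (congrArg c hxy ▸ v.2)).elim
  | Sum.inr ⟨i, v, j⟩, Sum.inr ⟨i', w, j'⟩ =>
    have hvw : (v : VG) = w := hxy
    obtain rfl : i = i' := hvs (v.2.symm.trans (hvw ▸ w.2))
    obtain rfl : v = w := Subtype.ext hvw
    obtain rfl : j = j' := hidx i v.2 v.2
    rfl

/-- The right-hand side is `Fin (z i)` if `a = vs i`, and a single point if `a` is not among
the `vs i`. -/
noncomputable def cloneFiberEquiv (hvs : Function.Injective vs) {v : VG} {a : VF}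
    (hv : c v = a) :
    {x : CloneVert c k vs z // cloneProj c k vs z x = v} ≃ ∀ i, a = vs i → Fin (z i) := by
  subst hv
  refine Equiv.ofBijective (fun x i hi => cloneIndex hvs x.1 i ((congrArg c x.2).trans hi))
    ⟨?_, ?_⟩
  · rintro ⟨x, rfl⟩ ⟨y, hy⟩ hxy
    exact Subtype.ext (cloneIndex_injective hvs hy.symm fun i hx _ => congrFun₂ hxy i hx)
  · intro g
    by_cases hcol : ∃ i, c v = vs i
    · obtain ⟨i, hi⟩ := hcol
      refine ⟨⟨Sum.inr ⟨i, ⟨v, hi⟩, g i hi⟩, rfl⟩, funext₂ fun i' hi' => ?_⟩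
      obtain rfl : i = i' := hvs (hi.symm.trans hi')
      rfl
    · push Not at hcol
      exact ⟨⟨Sum.inl ⟨v, hcol⟩, rfl⟩, funext₂ fun i hi => absurd hi (hcol i)⟩

def piColorClassEquiv {α ι γ : Type*} (τ : α → γ) (vs : ι → γ) (β : ι → Type*) :
    (∀ a, ∀ i, τ a = vs i → β i) ≃ ∀ i, {a // τ a = vs i} → β i where
  toFun g i a := g a.1 i a.2
  invFun f a i h := f i ⟨a, h⟩
  left_inv _ := rfl
  right_inv _ := rfl

noncomputable def cloneLiftEquiv (hvs : Function.Injective vs) {τ : VH → VF} {h : VH → VG}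
    (hc : ∀ u, c (h u) = τ u) :
    {f : VH → CloneVert c k vs z // ∀ u, cloneProj c k vs z (f u) = h u} ≃
      ∀ i, {u // τ u = vs i} → Fin (z i) :=
  Equiv.subtypePiEquivPi.trans <|
    (Equiv.piCongrRight fun u => cloneFiberEquiv hvs (hc u)).trans
      (piColorClassEquiv τ vs (Fin ∘ z))

noncomputable def cloneHomEquiv {H : SimpleGraph VH} {G : SimpleGraph VG}
    (τ : VH → VF) (hvs : Function.Injective vs) :
    {h : H →g cloneGraph G c k vs z // ∀ u, c (cloneProj c k vs z (h u)) = τ u} ≃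
      {h : H →g G // ∀ u, c (h u) = τ u} × ∀ i, {u : VH // τ u = vs i} → Fin (z i) :=
  (SimpleGraph.homComapColoringEquiv _ c τ).trans <|
    Equiv.sigmaEquivProdOfEquiv fun h => cloneLiftEquiv hvs h.2

end Clone

theorem stmt9_general {VH VG VF : Type*} [Finite VH]
    (H : SimpleGraph VH) (G : SimpleGraph VG) (F : SimpleGraph VF)
    (c : G →g F) (τ : H →g F)
    (k : ℕ) (vs : Fin k → VF) (hvs : Function.Injective vs)
    (z : Fin k → ℕ) :
    Nat.card {h : H →g cloneGraph G (⇑c) k vs z //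
        ∀ u, c (cloneProj (⇑c) k vs z (h u)) = τ u} =
      Nat.card {h : H →g G // ∀ u, c (h u) = τ u} *
        ∏ i : Fin k, z i ^ Nat.card {u : VH // τ u = vs i} := by
  rw [Nat.card_congr (cloneHomEquiv τ hvs), Nat.card_prod, Nat.card_pi]
  simp only [Nat.card_fun, Nat.card_fin]

/-- Cloning colour classes multiplies the number of `τ`-restricted
homomorphisms: `|Hom_τ(H,G',F,c')| = |Hom_τ(H,G,F,c)| · Π_i z_i ^ d_i`, where
`d_i = |{u ∈ V(H) : τ(u) = v_i}|` and `c' = c ∘ ρ`. -/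
theorem stmt9 {VH VG VF : Type*} [Finite VH] [Finite VG] [Finite VF]
    (H : SimpleGraph VH) (G : SimpleGraph VG) (F : SimpleGraph VF)
    (hF : F.Connected) (c : G →g F) (τ : H →g F)
    (k : ℕ) (vs : Fin k → VF) (hvs : Function.Injective vs)
    (z : Fin k → ℕ) (hz : ∀ i, 0 < z i) :
    Nat.card {h : H →g cloneGraph G (⇑c) k vs z //
        ∀ u, c (cloneProj (⇑c) k vs z (h u)) = τ u} =
      Nat.card {h : H →g G // ∀ u, c (h u) = τ u} *
        ∏ i : Fin k, z i ^ Nat.card {u : VH // τ u = vs i} :=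
  stmt9_general H G F c τ k vs hvs z
end

section
/- Let (H,X) be a counting minimal conjunctive query, G a graph, and c an H-colouring of G. Then the set of colour-prescribed answers cpAns((H,X),(G,c)) equals Ans^id((H,X),(G,c)), the set of answers a with c(a(x)) = x for all x ∈ X. -/
/-!
Given an answer `a` extended by `h : H →g G` with `c ∘ a = id` on `X`, the endomorphism
`c ∘ h` of `H` fixes `X` pointwise, so by minimality it is an automorphism `g`. Then
`h ∘ g⁻¹` still extends `a` (as `g⁻¹` fixes `X`) and is colour-prescribed, since
`c ∘ h ∘ g⁻¹ = g ∘ g⁻¹ = id`.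
-/

namespace SimpleGraph

variable {V W : Type*} {H : SimpleGraph V} {G : SimpleGraph W}

lemma Iso.symm_apply_eq_self_of_eqOn {X : Set V} {g : H ≃g H} {f : V → V}
    (hg : ∀ v, g v = f v) (hf : Set.EqOn f id X) {x : V} (hx : x ∈ X) : g.symm x = x := by
  rw [RelIso.symm_apply_eq, hg, hf hx, id]

lemma exists_colorPrescribed_eqOn_of_eqOn_id {X : Set V} (c : G →g H)
    (hmin : ∀ h : H →g H, Set.MapsTo ⇑h X X → Set.SurjOn ⇑h X X →
      ∃ g : H ≃g H, ∀ v, g v = h v)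
    (h : H →g G) (hfix : Set.EqOn (c ∘ h) id X) :
    ∃ h' : H →g G, (∀ v, c (h' v) = v) ∧ Set.EqOn h' h X := by
  obtain ⟨g, hg⟩ := hmin (c.comp h) ((Set.mapsTo_id X).congr hfix.symm)
    ((Set.surjOn_id X).congr hfix.symm)
  refine ⟨h.comp g.symm.toHom, fun v => ?_, fun x hx => ?_⟩
  · change c (h (g.symm v)) = v
    rw [← RelHom.comp_apply, ← hg, RelIso.apply_symm_apply]
  · change h (g.symm x) = h x
    rw [g.symm_apply_eq_self_of_eqOn hg hfix hx]

end SimpleGraph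

theorem stmt12_general {V W : Type*}
    (H : SimpleGraph V) (X : Set V) (G : SimpleGraph W) (c : G →g H)
    (hmin : ∀ h : H →g H, Set.MapsTo ⇑h X X → Set.SurjOn ⇑h X X →
      ∃ g : H ≃g H, ∀ v, g v = h v) :
    {a : ↥X → W | ∃ h : H →g G, (∀ v, c (h v) = v) ∧ ∀ x : ↥X, h ↑x = a x} =
    {a : ↥X → W | (∃ h : H →g G, ∀ x : ↥X, h ↑x = a x) ∧
      ∀ x : ↥X, c (a x) = ↑x} := by
  ext a
  constructor
  · rintro ⟨h, hc, hx⟩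
    exact ⟨⟨h, hx⟩, fun x => by rw [← hx x, hc]⟩
  · rintro ⟨⟨h, hx⟩, hca⟩
    have hfix : Set.EqOn (c ∘ h) id X := fun x hxX => by
      simp only [Function.comp_apply, hx ⟨x, hxX⟩, hca ⟨x, hxX⟩, id]
    obtain ⟨h', hc, hh'⟩ := SimpleGraph.exists_colorPrescribed_eqOn_of_eqOn_id c hmin h hfix
    exact ⟨h', hc, fun x => (hh' x.2).trans (hx x)⟩

/-- For a counting minimal conjunctive query `(H,X)` (formalised via
the relevant property: every homomorphism from `H` to itself that maps `X` surjectively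
onto `X` is (the underlying map of) an automorphism of `H`), a graph `G` and an
`H`-colouring `c` of `G`, the set of colour-prescribed answers `cpAns((H,X),(G,c))`
equals `Ans^id((H,X),(G,c))`. -/
theorem stmt12 {V W : Type*} [Finite V] [Finite W]
    (H : SimpleGraph V) (X : Set V) (G : SimpleGraph W) (c : G →g H)
    (hmin : ∀ h : H →g H, Set.MapsTo ⇑h X X → Set.SurjOn ⇑h X X →
      ∃ g : H ≃g H, ∀ v, g v = h v) :
    {a : ↥X → W | ∃ h : H →g G, (∀ v, c (h v) = v) ∧ ∀ x : ↥X, h ↑x = a x} =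
    {a : ↥X → W | (∃ h : H →g G, ∀ x : ↥X, h ↑x = a x) ∧
      ∀ x : ↥X, c (a x) = ↑x} :=
  stmt12_general H X G c hmin
end
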